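/- arXiv:2201.06284 — 2 statements merged into one kernel-verified Lean document; each statement's English description precedes it below -/
import Mathlib

section
/- The right R-module R is indecomposable if and only if the poset of right coprime pairs of R has exactly two minimal elements, namely the classes of (1,0) and (0,1). -/
def rspan (R : Type*) [Ring R] (a : R) : Submodule Rᵐᵒᵖ R := Submodule.span Rᵐᵒᵖ {a}

section helpers
variable {R : Type*} [Ring R]

lemma mem_rspan_iff {a x : R} : x ∈ rspan R a ↔ ∃ r : R, a * r = x := by
  rw [rspan, Submodule.mem_span_singleton]
  constructor
  · rintro ⟨c, rfl⟩; exact ⟨c.unop, rfl⟩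
  · rintro ⟨r, rfl⟩; exact ⟨MulOpposite.op r, rfl⟩

lemma rspan_le_of_eq_mul {a c : R} (p : R) (h : a * p = c) : rspan R c ≤ rspan R a := by
  rw [rspan, Submodule.span_singleton_le_iff_mem]
  exact mem_rspan_iff.2 ⟨p, h⟩

lemma rspan_le_rspan_iff {a c : R} : rspan R c ≤ rspan R a ↔ ∃ p : R, a * p = c := by
  constructor
  · intro h
    exact mem_rspan_iff.1 (h (mem_rspan_iff.2 ⟨1, mul_one c⟩))
  · rintro ⟨p, h⟩; exact rspan_le_of_eq_mul p h

lemma eq_zero_of_rspan_eq_zero {b : R} (h : rspan R b = rspan R 0) : b = 0 := by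
  have : b ∈ rspan R 0 := h ▸ mem_rspan_iff.2 ⟨1, mul_one b⟩
  obtain ⟨r, hr⟩ := mem_rspan_iff.1 this
  rw [← hr, zero_mul]

lemma rspan_eq_one_of {a : R} (v : R) (h : a * v = 1) : rspan R a = rspan R 1 := by
  apply le_antisymm
  · exact rspan_le_of_eq_mul a (one_mul a)
  · exact rspan_le_of_eq_mul v h

/-- If `e*e*t = e` then `e - e*e = e*(e - e*e)*(2*t - (1-e)*t - 1)`. -/
lemma key_aux (e t : R) (h : e*e*t = e) :
    e - e*e = e*(e - e*e)*(2*t - (1-e)*t - 1) := by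
  have expand : e*(e - e*e)*(2*t - (1-e)*t - 1)
      = e*e*t - e*e*(e*e*t) - e*e + e*e*e := by noncomm_ring
  rw [expand, h]; noncomm_ring

end helpers

/-- `R` is indecomposable as a right module over itself (it is nonzero and `0`, `1` are
its only idempotents) iff the poset of right coprime pairs has exactly two minimal
elements, namely the (distinct) classes of `(1,0)` and `(0,1)`. -/
theorem indecomposable_iff_two_minimal_coprime_pairs {R : Type*} [Ring R] :
    (Nontrivial R ∧ ∀ e : R, IsIdempotentElem e → e = 0 ∨ e = 1) ↔
      (rspan R (1 : R) ≠ rspan R (0 : R) ∧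
        ∀ a b : R, (∃ r s : R, a * r + b * s = 1) →
          ((∀ c d : R, (∃ r s : R, c * r + d * s = 1) →
              rspan R c ≤ rspan R a → rspan R d ≤ rspan R b →
              rspan R c = rspan R a ∧ rspan R d = rspan R b) ↔
            ((rspan R a = rspan R (1 : R) ∧ rspan R b = rspan R (0 : R)) ∨
              (rspan R a = rspan R (0 : R) ∧ rspan R b = rspan R (1 : R))))) := by
  constructor
  · rintro ⟨hnt, hid⟩
    haveI := hnt
    refine ⟨fun h => one_ne_zero (eq_zero_of_rspan_eq_zero h), ?_⟩
    rintro a b ⟨r, s, hrs⟩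
    constructor
    · -- hard direction: minimality implies triviality
      intro Hmin
      obtain ⟨e, hE⟩ : ∃ x : R, x = a * r := ⟨_, rfl⟩
      have hbs : b * s = 1 - e := by rw [hE, ← hrs]; noncomm_ring
      have H0 := Hmin e (1-e) ⟨1, 1, by noncomm_ring⟩
        (rspan_le_of_eq_mul r hE.symm) (rspan_le_of_eq_mul s hbs)
      have Hmin' : ∀ c d : R, (∃ r s : R, c * r + d * s = 1) →
          rspan R c ≤ rspan R e → rspan R d ≤ rspan R (1-e) →
          rspan R c = rspan R e ∧ rspan R d = rspan R (1-e) := by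
        intro c d hcd hc hd
        obtain ⟨h1, h2⟩ := Hmin c d hcd (hc.trans H0.1.le) (hd.trans H0.2.le)
        exact ⟨h1.trans H0.1.symm, h2.trans H0.2.symm⟩
      -- Step 2: e ∈ e²R
      have pt := Hmin' (e*e) (1-e) ⟨1, e+1, by noncomm_ring⟩
        (rspan_le_of_eq_mul e rfl) le_rfl
      obtain ⟨t, het⟩ : ∃ t : R, (e*e)*t = e := rspan_le_rspan_iff.1 pt.1.ge
      -- Step 3: (1-e) ∈ (1-e)²R
      have pu := Hmin' e ((1-e)*(1-e)) ⟨(1-e)+1, 1, by noncomm_ring⟩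
        le_rfl (rspan_le_of_eq_mul (1-e) rfl)
      obtain ⟨u, huu⟩ : ∃ u : R, ((1-e)*(1-e))*u = 1-e := rspan_le_rspan_iff.1 pu.2.ge
      -- Step 4: z := e - e*e satisfies z = z*z*s'
      have key1 : e - e*e = e*(e - e*e)*(2*t - (1-e)*t - 1) := key_aux e t het
      have key2 : e - e*e = (1-e)*(e - e*e)*(2*u - e*u - 1) := by
        calc e - e*e = (1-e) - (1-e)*(1-e) := by noncomm_ring
        _ = (1-e)*((1-e) - (1-e)*(1-e))*(2*u - (1-(1-e))*u - 1) :=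
            key_aux (1-e) u huu
        _ = (1-e)*(e - e*e)*(2*u - e*u - 1) := by noncomm_ring
      have hz3 : e - e*e = (e - e*e)*(e - e*e)*((2*u - e*u - 1)*(2*t - (1-e)*t - 1)) := by
        calc e - e*e = e*(e - e*e)*(2*t - (1-e)*t - 1) := key1
        _ = e*((1-e)*(e - e*e)*(2*u - e*u - 1))*(2*t - (1-e)*t - 1) := by rw [← key2]
        _ = (e - e*e)*(e - e*e)*((2*u - e*u - 1)*(2*t - (1-e)*t - 1)) := by noncomm_ring
      obtain ⟨s', hs'⟩ : ∃ v : R, e - e*e = (e - e*e)*(e - e*e)*v := ⟨_, hz3⟩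
      -- Step 5: 1 - (e-e*e)*s' is right invertible
      have pw := Hmin' ((1 - (e - e*e)*s')*e) (1-e) ⟨1, e*s'*e+1, by noncomm_ring⟩
        (rspan_le_of_eq_mul (1 - (1-e)*s'*e) (by noncomm_ring)) le_rfl
      obtain ⟨w, hw⟩ : ∃ w : R, ((1 - (e - e*e)*s')*e)*w = e := rspan_le_rspan_iff.1 pw.1.ge
      have pv := Hmin' e ((1 - (e - e*e)*s')*(1-e)) ⟨1 + (1-e)*s'*(1-e), 1, by noncomm_ring⟩
        le_rfl (rspan_le_of_eq_mul (1 - e*s'*(1-e)) (by noncomm_ring))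
      obtain ⟨v, hv⟩ : ∃ v : R, ((1 - (e - e*e)*s')*(1-e))*v = 1-e := rspan_le_rspan_iff.1 pv.2.ge
      have hone : (1 - (e - e*e)*s')*(e*w + (1-e)*v) = 1 := by
        calc (1 - (e - e*e)*s')*(e*w + (1-e)*v)
            = ((1 - (e - e*e)*s')*e)*w + ((1 - (e - e*e)*s')*(1-e))*v := by noncomm_ring
        _ = e + (1-e) := by rw [hw, hv]
        _ = 1 := by noncomm_ring
      -- Step 6: z = 0, so e is idempotent
      have hz0 : (e - e*e)*(1 - (e - e*e)*s') = 0 := by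
        calc (e - e*e)*(1 - (e - e*e)*s') = (e - e*e) - (e - e*e)*(e - e*e)*s' := by noncomm_ring
        _ = 0 := by rw [← hs']; exact sub_self _
      have hzz : e - e*e = 0 := by
        calc e - e*e = (e - e*e)*((1 - (e - e*e)*s')*(e*w + (1-e)*v)) := by rw [hone, mul_one]
        _ = ((e - e*e)*(1 - (e - e*e)*s'))*(e*w + (1-e)*v) := by noncomm_ring
        _ = 0 := by rw [hz0, zero_mul]
      have hidem : IsIdempotentElem e := (sub_eq_zero.mp hzz).symm
      rcases hid e hidem with h0 | h1
      · right
        rw [h0] at H0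
        rw [sub_zero] at H0
        exact ⟨H0.1.symm, H0.2.symm⟩
      · left
        rw [h1] at H0
        rw [sub_self] at H0
        exact ⟨H0.1.symm, H0.2.symm⟩
    · -- easy direction: trivial pairs are minimal
      rintro (⟨ha, hb⟩ | ⟨ha, hb⟩) <;> intro c d hcd hc hd
      · obtain ⟨r', s', hrs'⟩ := hcd
        obtain ⟨p, hp⟩ := rspan_le_rspan_iff.1 (hd.trans hb.le)
        have hd0 : d = 0 := by rw [← hp, zero_mul]
        have hcr : c * r' = 1 := by rw [hd0] at hrs'; simpa using hrs'
        refine ⟨?_, ?_⟩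
        · rw [ha]; exact rspan_eq_one_of r' hcr
        · rw [hd0, hb]
      · obtain ⟨r', s', hrs'⟩ := hcd
        obtain ⟨p, hp⟩ := rspan_le_rspan_iff.1 (hc.trans ha.le)
        have hc0 : c = 0 := by rw [← hp, zero_mul]
        have hds : d * s' = 1 := by rw [hc0] at hrs'; simpa using hrs'
        refine ⟨?_, ?_⟩
        · rw [hc0, ha]
        · rw [hb]; exact rspan_eq_one_of s' hds
  · rintro ⟨h10, H⟩
    have hone : (1:R) ≠ 0 := by
      intro h; apply h10; rw [h]
    haveI : Nontrivial R := nontrivial_of_ne 1 0 hone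
    refine ⟨this, ?_⟩
    intro e he
    have hmin : ∀ c d : R, (∃ r s : R, c * r + d * s = 1) →
        rspan R c ≤ rspan R e → rspan R d ≤ rspan R (1-e) →
        rspan R c = rspan R e ∧ rspan R d = rspan R (1-e) := by
      intro c d hcd hc hd
      obtain ⟨r', s', hrs'⟩ := hcd
      obtain ⟨p, hp⟩ := rspan_le_rspan_iff.1 hc
      obtain ⟨q, hq⟩ := rspan_le_rspan_iff.1 hd
      have hec : e*c = c := by
        rw [← hp]
        calc e*(e*p) = (e*e)*p := by noncomm_ring
        _ = e*p := by rw [he]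
      have hed : e*d = 0 := by
        rw [← hq]
        calc e*((1-e)*q) = (e - e*e)*q := by noncomm_ring
        _ = 0 := by rw [he, sub_self, zero_mul]
      have hfc : (1-e)*c = 0 := by
        rw [← hp]
        calc (1-e)*(e*p) = (e - e*e)*p := by noncomm_ring
        _ = 0 := by rw [he, sub_self, zero_mul]
      have hfd : (1-e)*d = d := by
        rw [← hq]
        calc (1-e)*((1-e)*q) = (1-e)*q - (e - e*e)*q := by noncomm_ring
        _ = (1-e)*q := by rw [he, sub_self, zero_mul, sub_zero]
      have h1 : e = c * r' := by
        calc e = e*(c*r' + d*s') := by rw [hrs', mul_one]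
        _ = (e*c)*r' + (e*d)*s' := by noncomm_ring
        _ = c*r' := by rw [hec, hed, zero_mul, add_zero]
      have h2 : 1-e = d * s' := by
        calc 1-e = (1-e)*(c*r' + d*s') := by rw [hrs', mul_one]
        _ = ((1-e)*c)*r' + ((1-e)*d)*s' := by noncomm_ring
        _ = d*s' := by rw [hfc, hfd, zero_mul, zero_add]
      exact ⟨le_antisymm hc (rspan_le_of_eq_mul r' h1.symm),
             le_antisymm hd (rspan_le_of_eq_mul s' h2.symm)⟩
    have := (H e (1-e) ⟨1, 1, by noncomm_ring⟩).mp hmin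
    rcases this with ⟨_, hb⟩ | ⟨ha, _⟩
    · right
      have : (1:R) - e = 0 := eq_zero_of_rspan_eq_zero hb
      have := sub_eq_zero.mp this
      exact this.symm
    · left
      exact eq_zero_of_rspan_eq_zero ha
end

section
/- A ring R is an exchange ring (for every r ∈ R there exists an idempotent e with e ∈ rR and 1-e ∈ (1-r)R) if and only if for every right coprime pair (a,b) there exists an idempotent e ∈ R with eR ⊆ aR and (1-e)R ⊆ bR. -/
lemma rspan_le_iff {R : Type*} [Ring R] {u a : R} :
    rspan R u ≤ rspan R a ↔ ∃ x : R, u = a * x := by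
  rw [rspan, rspan, Submodule.span_le, Set.singleton_subset_iff, SetLike.mem_coe,
    Submodule.mem_span_singleton]
  constructor
  · rintro ⟨c, hc⟩
    exact ⟨c.unop, by simpa [MulOpposite.smul_eq_mul_unop] using hc.symm⟩
  · rintro ⟨x, hx⟩
    exact ⟨MulOpposite.op x, by simp [MulOpposite.smul_eq_mul_unop, hx]⟩

/-- `R` is an exchange ring (for every `r` there is an idempotent `e ∈ rR` with
`1 - e ∈ (1-r)R`) iff below every right coprime pair `(a,b)` there is an idempotent `e`
with `eR ⊆ aR` and `(1-e)R ⊆ bR`. -/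
theorem exchange_iff_minimal_below_coprime {R : Type*} [Ring R] :
    (∀ r : R, ∃ e : R, IsIdempotentElem e ∧ (∃ x : R, e = r * x) ∧
        (∃ y : R, 1 - e = (1 - r) * y)) ↔
      (∀ a b : R, (∃ r s : R, a * r + b * s = 1) →
        ∃ e : R, IsIdempotentElem e ∧ rspan R e ≤ rspan R a ∧
          rspan R (1 - e) ≤ rspan R b) := by
  constructor
  · rintro h a b ⟨r, s, hrs⟩
    obtain ⟨e, he, ⟨x, hx⟩, ⟨y, hy⟩⟩ := h (a * r)
    refine ⟨e, he, rspan_le_iff.2 ⟨r * x, by rw [hx, mul_assoc]⟩,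
      rspan_le_iff.2 ⟨s * y, ?_⟩⟩
    have hb : 1 - a * r = b * s := by rw [← hrs]; noncomm_ring
    rw [hy, hb, mul_assoc]
  · rintro h r
    obtain ⟨e, he, h1, h2⟩ := h r (1 - r) ⟨1, 1, by noncomm_ring⟩
    obtain ⟨x, hx⟩ := rspan_le_iff.1 h1
    obtain ⟨y, hy⟩ := rspan_le_iff.1 h2
    exact ⟨e, he, ⟨x, hx⟩, ⟨y, hy⟩⟩
end
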